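/- arXiv:1708.04986 — 2 statements merged into one kernel-verified Lean document; each statement's English description precedes it below -/
import Mathlib

section
/- For every n ≥ 9 with n ≡ 3 (mod 6), the Steiner triple system on {0,1,...,n-1} obtained by applying the Bose Mapping to the blocks of the Bose Construction has max-sum at most 8n/3 - 4. -/
/-- The Bose operation on `{0,1,…,m-1}` (for `m` odd):
`x ⊕_b y = ((m+1)/2)(x+y) mod m`. -/
def boseOp (m x y : ℕ) : ℕ := ((m + 1) / 2 * (x + y)) % m

/-- The Bose Mapping `π_B` on points `(x,i)`, `x ∈ {0,…,m-1}`, `i ∈ {0,1,2}`: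
`(x,0) ↦ x`; `(x,1) ↦ 2m` if `x = 0` and `(x,1) ↦ 3m - y` where `x = 0 ⊕_b y ≠ 0`
(here `y = (2x) mod m` is the unique element with `0 ⊕_b y = x`);
`(x,2) ↦ m` if `x = 0` and `(x,2) ↦ m + (0 ⊕_b (m-x))` if `x ≠ 0`. -/
def boseMap (m : ℕ) (p : ℕ × ℕ) : ℕ :=
  if p.2 = 0 then p.1
  else if p.2 = 1 then (if p.1 = 0 then 2 * m else 3 * m - (2 * p.1) % m)
  else if p.1 = 0 then m else m + boseOp m 0 (m - p.1)

/-- The block set of the Bose Construction on the point set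
`X' = {(x,i) : x ∈ {0,…,m-1}, i ∈ {0,1,2}}`:
Type 1 blocks `{(x,0),(x,1),(x,2)}` for `x ∈ {0,…,m-1}`, and Type 2 blocks
`{(x,i),(y,i),(x ⊕_b y, (i+1) mod 3)}` for `0 ≤ x < y ≤ m-1`, `i ∈ {0,1,2}`. -/
def boseBlocks (m : ℕ) : Finset (Finset (ℕ × ℕ)) :=
  ((Finset.range m).image fun x => ({(x, 0), (x, 1), (x, 2)} : Finset (ℕ × ℕ))) ∪
  ((((Finset.range m ×ˢ Finset.range m).filter fun p => p.1 < p.2) ×ˢ Finset.range 3).image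
    fun q => ({(q.1.1, q.2), (q.1.2, q.2), (boseOp m q.1.1 q.1.2, (q.2 + 1) % 3)} :
      Finset (ℕ × ℕ)))

/-- A Steiner triple system of order `n` on the point set `{0,1,…,n-1}`. -/
def IsSTS (n : ℕ) (B : Finset (Finset ℕ)) : Prop :=
  (∀ b ∈ B, b ⊆ Finset.range n ∧ b.card = 3) ∧
  ∀ T : Finset ℕ, T ⊆ Finset.range n → T.card = 2 → ∃! b, b ∈ B ∧ T ⊆ b

/-!
The Bose Mapping sends level `0` into `[0, m)`, level `2` into `[m, 2m)` and level `1`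
injectively into `[2m, 3m)`, the latter because `2` is invertible modulo the odd number `m`. Every block has at most two points on a common level, so the heaviest possible
block consists of two level-`1` points and a level-`2` point, of total weight at most
`(3m - 1) + (3m - 2) + (2m - 1) = 8m - 4`.
-/

theorem Finset.sum_insert_le {ι M : Type*} [DecidableEq ι] [AddCommMonoid M] [PartialOrder M]
    [CanonicallyOrderedAdd M] (a : ι) (s : Finset ι) (f : ι → M) :
    ∑ x ∈ insert a s, f x ≤ f a + ∑ x ∈ s, f x := by
  by_cases h : a ∈ s
  · rw [Finset.insert_eq_of_mem h]
    exact le_add_self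
  · rw [Finset.sum_insert h]

theorem Finset.sum_triple_le {ι M : Type*} [DecidableEq ι] [AddCommMonoid M] [PartialOrder M]
    [CanonicallyOrderedAdd M] [AddLeftMono M] (a b c : ι) (f : ι → M) :
    ∑ x ∈ {a, b, c}, f x ≤ f a + f b + f c := by
  calc ∑ x ∈ {a, b, c}, f x ≤ f a + ∑ x ∈ {b, c}, f x := Finset.sum_insert_le _ _ _
    _ ≤ f a + (f b + f c) := by
      gcongr
      simpa using Finset.sum_insert_le b {c} f
    _ = f a + f b + f c := (add_assoc _ _ _).symm

namespace Nat

theorem two_mul_mod_injOn {m : ℕ} (hm : Odd m) : Set.InjOn (fun x => 2 * x % m) (Set.Iio m) :=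
  fun _ hx _ hy h =>
    Nat.ModEq.eq_of_lt_of_lt (Nat.ModEq.cancel_left_of_coprime (coprime_two_right.mpr hm) h) hx hy

theorem two_mul_mod_ne_zero {m x : ℕ} (hm : Odd m) (hx₀ : x ≠ 0) (hx : x < m) : 2 * x % m ≠ 0 :=
  fun h => hx₀ <| two_mul_mod_injOn hm hx (show 0 < m by omega) (by simpa using h)

end Nat

section BoseMap

variable {m : ℕ}

@[simp]
theorem boseMap_zero (m x : ℕ) : boseMap m (x, 0) = x := rfl

theorem boseMap_one (m x : ℕ) :
    boseMap m (x, 1) = if x = 0 then 2 * m else 3 * m - 2 * x % m := rfl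

theorem boseMap_two (m x : ℕ) :
    boseMap m (x, 2) = if x = 0 then m else m + boseOp m 0 (m - x) := rfl

theorem boseMap_two_lt (hm : 0 < m) (x : ℕ) : boseMap m (x, 2) < 2 * m := by
  have : boseOp m 0 (m - x) < m := Nat.mod_lt _ hm
  rw [boseMap_two]
  split_ifs <;> omega

theorem boseMap_one_lt (hm : Odd m) {x : ℕ} (hx : x < m) : boseMap m (x, 1) < 3 * m := by
  rw [boseMap_one]
  split_ifs with hx₀
  · omega
  · have := Nat.two_mul_mod_ne_zero hm hx₀ hx
    omega

theorem boseMap_one_injOn (hm : Odd m) : Set.InjOn (fun x => boseMap m (x, 1)) (Set.Iio m) := by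
  intro x hx y hy h
  have hxm : 2 * x % m < m := Nat.mod_lt _ hm.pos
  have hym : 2 * y % m < m := Nat.mod_lt _ hm.pos
  simp only [boseMap_one] at h
  split_ifs at h with hx₀ hy₀ hy₀
  · omega
  · have := Nat.two_mul_mod_ne_zero hm hy₀ hy; omega
  · have := Nat.two_mul_mod_ne_zero hm hx₀ hx; omega
  · exact Nat.two_mul_mod_injOn hm hx hy (by simp only; omega)

theorem boseMap_one_add_one_le (hm : Odd m) {x y : ℕ} (hx : x < m) (hy : y < m) (hxy : x ≠ y) :
    boseMap m (x, 1) + boseMap m (y, 1) ≤ 6 * m - 3 := by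
  have hne : boseMap m (x, 1) ≠ boseMap m (y, 1) := fun h => hxy (boseMap_one_injOn hm hx hy h)
  have := boseMap_one_lt hm hx
  have := boseMap_one_lt hm hy
  omega

end BoseMap

theorem boseBlocks_sum_boseMap_le {m : ℕ} (hm : Odd m) :
    ∀ B ∈ boseBlocks m, ∑ p ∈ B, boseMap m p ≤ 8 * m - 4 := by
  have hm₀ : 0 < m := hm.pos
  intro B hB
  simp only [boseBlocks, Finset.mem_union, Finset.mem_image, Finset.mem_product,
    Finset.mem_filter, Finset.mem_range] at hB
  rcases hB with ⟨x, hx, rfl⟩ | ⟨⟨⟨x, y⟩, i⟩, ⟨⟨⟨hx, hy⟩, hxy⟩, hi⟩, rfl⟩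
  · refine (Finset.sum_triple_le _ _ _ _).trans ?_
    have := boseMap_one_lt hm hx
    have := boseMap_two_lt hm₀ x
    simp only [boseMap_zero]
    omega
  · refine (Finset.sum_triple_le _ _ _ _).trans ?_
    have hz : boseOp m x y < m := Nat.mod_lt _ hm₀
    dsimp only at hx hy hxy ⊢
    interval_cases i <;> simp only [Nat.reduceAdd, Nat.reduceMod, boseMap_zero]
    · have := boseMap_one_lt hm hz
      omega
    · have := boseMap_one_add_one_le hm hx hy hxy.ne
      have := boseMap_two_lt hm₀ (boseOp m x y)
      omega
    · have := boseMap_two_lt hm₀ x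
      have := boseMap_two_lt hm₀ y
      omega

theorem bose_sts_maxSum_le_general (n : ℕ) (hmod : n % 6 = 3) :
    ∀ b ∈ (boseBlocks (n / 3)).image fun b => b.image (boseMap (n / 3)),
      ∑ x ∈ b, x ≤ 8 * n / 3 - 4 := by
  have hodd : Odd (n / 3) := ⟨n / 6, by omega⟩
  have hbound : 8 * n / 3 = 8 * (n / 3) := by omega
  simp only [Finset.forall_mem_image, hbound]
  intro B hB
  calc ∑ x ∈ B.image (boseMap (n / 3)), x ≤ ∑ p ∈ B, boseMap (n / 3) p :=
        Finset.sum_image_le_of_nonneg fun _ _ => Nat.zero_le _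
    _ ≤ 8 * (n / 3) - 4 := boseBlocks_sum_boseMap_le hodd B hB

/-- For every `n ≥ 9` with `n ≡ 3 (mod 6)`, the Steiner triple system on
`{0,…,n-1}` obtained by applying the Bose Mapping to the blocks of the Bose
Construction has max-sum at most `8n/3 - 4`. -/
theorem bose_sts_maxSum_le (n : ℕ) (hn : 9 ≤ n) (hmod : n % 6 = 3) :
    ∀ b ∈ (boseBlocks (n / 3)).image fun b => b.image (boseMap (n / 3)),
      ∑ x ∈ b, x ≤ 8 * n / 3 - 4 :=
  bose_sts_maxSum_le_general n hmod
end

section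
/- For every n ≥ 7 with n ≡ 1 (mod 6), the Steiner triple system on {0,1,...,n-1} obtained by applying the Skolem Mapping to the blocks of the Skolem Construction has max-sum at most (8n-11)/3. -/
/-- The Skolem operation on `{0,1,…,m-1}` (for `m` even):
`x ⊕_s y = ((x+y) mod m)/2` if `(x+y) mod m` is even, and
`x ⊕_s y = (((x+y) mod m)+m-1)/2` if `(x+y) mod m` is odd. -/
def skolemOp (m x y : ℕ) : ℕ :=
  if Even ((x + y) % m) then (x + y) % m / 2 else ((x + y) % m + m - 1) / 2

/-- The unique `y` with `(m-1) ⊕_s y = x` (used to define `π_S((x,1))`):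
`y = 0` if `x = m-1`, `y = 2x+1` if `x < m/2`, and `y = 2x+2-m` otherwise. -/
def skolemInv (m x : ℕ) : ℕ :=
  if x = m - 1 then 0 else if x < m / 2 then 2 * x + 1 else 2 * x + 2 - m

/-- The Skolem Mapping `π_S` on the point set
`X' = {∞} ∪ {(x,i) : x ∈ {0,…,m-1}, i ∈ {0,1,2}}` (with `∞` encoded as `none`):
`(x,0) ↦ m-1-x`; `(x,1) ↦ 2m+1` if `x = m/2-1`, and `(x,1) ↦ 2m+2+y` where
`x = (m-1) ⊕_s y ≠ m/2-1`; `(x,2) ↦ m+1+(0 ⊕_s x)`; `∞ ↦ m`. -/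
def skolemMap (m : ℕ) : Option (ℕ × ℕ) → ℕ
  | none => m
  | some p =>
    if p.2 = 0 then m - 1 - p.1
    else if p.2 = 1 then
      (if p.1 = m / 2 - 1 then 2 * m + 1 else 2 * m + 2 + skolemInv m p.1)
    else m + 1 + skolemOp m 0 p.1

/-- The block set of the Skolem Construction on the point set
`X' = {∞} ∪ {(x,i) : x ∈ {0,…,m-1}, i ∈ {0,1,2}}` (with `∞` encoded as `none`):
Type 1 blocks `{(x,0),(x,1),(x,2)}` for `x ∈ {0,…,m/2-1}`;
Type 2 blocks `{(x,i),(y,i),(x ⊕_s y, (i+1) mod 3)}` for `0 ≤ x < y ≤ m-1`,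
`i ∈ {0,1,2}`; Type 3 blocks `{∞,(x+m/2,i),(x,(i+1) mod 3)}` for
`x ∈ {0,…,m/2-1}`, `i ∈ {0,1,2}`. -/
def skolemBlocks (m : ℕ) : Finset (Finset (Option (ℕ × ℕ))) :=
  ((Finset.range (m / 2)).image fun x =>
    ({some (x, 0), some (x, 1), some (x, 2)} : Finset (Option (ℕ × ℕ)))) ∪
  ((((Finset.range m ×ˢ Finset.range m).filter fun p => p.1 < p.2) ×ˢ Finset.range 3).image
    fun q => ({some (q.1.1, q.2), some (q.1.2, q.2),
      some (skolemOp m q.1.1 q.1.2, (q.2 + 1) % 3)} : Finset (Option (ℕ × ℕ)))) ∪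
  ((Finset.range (m / 2) ×ˢ Finset.range 3).image
    fun q => ({none, some (q.1 + m / 2, q.2), some (q.1, (q.2 + 1) % 3)} :
      Finset (Option (ℕ × ℕ))))

/-!
Write `n = 3m + 1`. Under `π_S` the points of level `0`, the point `∞` and the points of
level `2` land in `[0, 2m]`, while the points of level `1` land injectively in `[2m + 1, 3m]`.
A block with at most one point of level `1` therefore sums to at most `3m + 2m + 2m ≤ 8m - 1`.
The only blocks with two points of level `1` are the Type 2 blocks with `i = 1`, and there
injectivity gives `(3m - 1) + 3m + 2m = 8m - 1`, which is `(8n - 11)/3`.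
-/

namespace Finset

variable {α : Type*} [DecidableEq α]

theorem sum_insert_le_add (a : α) (s : Finset α) (f : α → ℕ) :
    ∑ x ∈ insert a s, f x ≤ f a + ∑ x ∈ s, f x := by
  by_cases h : a ∈ s
  · rw [insert_eq_of_mem h]
    exact Nat.le_add_left _ _
  · rw [sum_insert h]

theorem sum_triple_le_s17 (f : α → ℕ) (a b c : α) :
    ∑ x ∈ ({a, b, c} : Finset α), f x ≤ f a + f b + f c := by
  calc ∑ x ∈ ({a, b, c} : Finset α), f x ≤ f a + ∑ x ∈ ({b, c} : Finset α), f x :=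
        sum_insert_le_add _ _ _
    _ ≤ f a + (f b + f c) := by
        gcongr
        simpa using sum_insert_le_add b {c} f
    _ = f a + f b + f c := (add_assoc _ _ _).symm

end Finset

section Skolem

variable {m : ℕ}

theorem skolemOp_lt (hm : 0 < m) (x y : ℕ) : skolemOp m x y < m := by
  have : (x + y) % m < m := Nat.mod_lt _ hm
  unfold skolemOp
  split <;> omega

theorem skolemMap_none : skolemMap m none = m := rfl

theorem skolemMap_some_zero (x : ℕ) : skolemMap m (some (x, 0)) = m - 1 - x := rfl

theorem skolemMap_some_one (x : ℕ) : skolemMap m (some (x, 1)) =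
    if x = m / 2 - 1 then 2 * m + 1 else 2 * m + 2 + skolemInv m x := rfl

theorem skolemMap_some_two (x : ℕ) : skolemMap m (some (x, 2)) = m + 1 + skolemOp m 0 x := rfl

theorem skolemMap_some_two_le (hm : 0 < m) (x : ℕ) : skolemMap m (some (x, 2)) ≤ 2 * m := by
  have := skolemOp_lt hm 0 x
  rw [skolemMap_some_two]
  omega

theorem skolemMap_some_one_le {x : ℕ} (hx : x < m) : skolemMap m (some (x, 1)) ≤ 3 * m := by
  rw [skolemMap_some_one]
  unfold skolemInv
  split_ifs <;> omega

theorem skolemMap_some_one_injOn (hm : Even m) :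
    Set.InjOn (fun x => skolemMap m (some (x, 1))) (Set.Iio m) := by
  intro x hx y hy hxy
  rw [Nat.even_iff] at hm
  simp only [Set.mem_Iio, skolemMap_some_one] at hx hy hxy
  unfold skolemInv at hxy
  split_ifs at hxy <;> omega

theorem sum_skolemMap_le_of_mem_skolemBlocks (hm : Even m) {b : Finset (Option (ℕ × ℕ))}
    (hb : b ∈ skolemBlocks m) : ∑ p ∈ b, skolemMap m p ≤ 8 * m - 1 := by
  simp only [skolemBlocks, Finset.mem_union, Finset.mem_image, Finset.mem_range,
    Finset.mem_product, Finset.mem_filter] at hb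
  rcases hb with (⟨x, hx, rfl⟩ | ⟨⟨⟨x, y⟩, i⟩, ⟨⟨⟨hx, hy⟩, hxy⟩, hi⟩, rfl⟩) |
    ⟨⟨x, i⟩, ⟨hx, hi⟩, rfl⟩
  all_goals
    refine (Finset.sum_triple_le_s17 _ _ _ _).trans ?_
    have hm0 : 0 < m := by omega
  case inl.inl =>
    have := skolemMap_some_one_le (m := m) (x := x) (by omega)
    have := skolemMap_some_two_le hm0 x
    rw [skolemMap_some_zero]
    omega
  case inl.inr =>
    dsimp only at hx hy hxy
    have hz := skolemOp_lt hm0 x y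
    interval_cases i <;> simp only [Nat.reduceAdd, Nat.reduceMod]
    · have := skolemMap_some_one_le hz
      rw [skolemMap_some_zero, skolemMap_some_zero]
      omega
    · have := skolemMap_some_one_le hx
      have := skolemMap_some_one_le hy
      have := (skolemMap_some_one_injOn hm).ne hx hy hxy.ne
      have := skolemMap_some_two_le hm0 (skolemOp m x y)
      omega
    · have := skolemMap_some_two_le hm0 x
      have := skolemMap_some_two_le hm0 y
      rw [skolemMap_some_zero]
      omega
  case inr =>
    rw [skolemMap_none]
    interval_cases i <;> simp only [Nat.reduceAdd, Nat.reduceMod]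
    · have := skolemMap_some_one_le (m := m) (x := x) (by omega)
      rw [skolemMap_some_zero]
      omega
    · have := skolemMap_some_one_le (m := m) (x := x + m / 2) (by omega)
      have := skolemMap_some_two_le hm0 x
      omega
    · have := skolemMap_some_two_le hm0 (x + m / 2)
      rw [skolemMap_some_zero]
      omega

end Skolem

theorem skolem_sts_maxSum_le_general (n : ℕ) (hmod : n % 6 = 1) :
    ∀ b ∈ (skolemBlocks ((n - 1) / 3)).image fun b => b.image (skolemMap ((n - 1) / 3)),
      ∑ x ∈ b, x ≤ (8 * n - 11) / 3 := by
  intro b hb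
  obtain ⟨B, hB, rfl⟩ := Finset.mem_image.mp hb
  set m := (n - 1) / 3
  have hm : Even m := Nat.even_iff.mpr (by omega)
  calc ∑ x ∈ B.image (skolemMap m), x ≤ ∑ p ∈ B, skolemMap m p :=
        Finset.sum_image_le_of_nonneg fun _ _ => Nat.zero_le _
    _ ≤ 8 * m - 1 := sum_skolemMap_le_of_mem_skolemBlocks hm hB
    _ = (8 * n - 11) / 3 := by omega

/-- For every `n ≥ 7` with `n ≡ 1 (mod 6)`, the Steiner triple system on
`{0,…,n-1}` obtained by applying the Skolem Mapping to the blocks of the Skolem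
Construction has max-sum at most `(8n-11)/3`. -/
theorem skolem_sts_maxSum_le (n : ℕ) (hn : 7 ≤ n) (hmod : n % 6 = 1) :
    ∀ b ∈ (skolemBlocks ((n - 1) / 3)).image fun b => b.image (skolemMap ((n - 1) / 3)),
      ∑ x ∈ b, x ≤ (8 * n - 11) / 3 :=
  skolem_sts_maxSum_le_general n hmod
end
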